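/- arXiv:1402.0459 — 5 statements merged into one kernel-verified Lean document; each statement's English description precedes it below -/
import Mathlib

section
/- Covering lemma for finite-dimensional normed spaces: for any finite-dimensional normed vector space (ℝ^m, ‖·‖), there exist finitely many sets A₁,…,A_c with ℝ^m = A₁ ∪ … ∪ A_c such that for every i and all x, y ∈ Aᵢ, ‖y‖ > ‖x‖ implies ‖y − x‖ < ‖y‖. -/
/-!
Cover the unit sphere by finitely many balls of radius `1/2` (it is compact) and take, for each
ball, the cone of nonzero vectors whose direction lies in it, together with `{0}` (which must be
its own piece, as `‖y - 0‖ = ‖y‖`). Two vectors `x`, `y` of one cone have directions `a`, `b`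
at distance `< 1`, so writing `y - x = (‖y‖ - ‖x‖) • b + ‖x‖ • (b - a)` gives
`‖y - x‖ < (‖y‖ - ‖x‖) + ‖x‖ = ‖y‖` when `‖x‖ ≤ ‖y‖`.
-/

open Metric Set NormedSpace

section

variable {V : Type*} [NormedAddCommGroup V] [NormedSpace ℝ V]

theorem norm_sub_lt_of_dist_normalize_lt_one {x y : V} (hx : x ≠ 0) (hxy : ‖x‖ ≤ ‖y‖)
    (h : dist (normalize y) (normalize x) < 1) : ‖y - x‖ < ‖y‖ := by
  have hx_pos : 0 < ‖x‖ := norm_pos_iff.2 hx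
  have hy : y ≠ 0 := norm_pos_iff.1 (hx_pos.trans_le hxy)
  have hdecomp : y - x = (‖y‖ - ‖x‖) • normalize y + ‖x‖ • (normalize y - normalize x) := by
    conv_lhs => rw [← norm_smul_normalize y, ← norm_smul_normalize x]
    module
  calc ‖y - x‖
      ≤ ‖(‖y‖ - ‖x‖) • normalize y‖ + ‖‖x‖ • (normalize y - normalize x)‖ := by
        rw [hdecomp]; exact norm_add_le _ _
    _ = (‖y‖ - ‖x‖) + ‖x‖ * dist (normalize y) (normalize x) := by
        rw [norm_smul, norm_smul, norm_normalize_eq_one_iff.2 hy, Real.norm_of_nonneg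
          (sub_nonneg.2 hxy), norm_norm, dist_eq_norm, mul_one]
    _ < (‖y‖ - ‖x‖) + ‖x‖ * 1 := by gcongr
    _ = ‖y‖ := by ring

def directionCone (u : V) (r : ℝ) : Set V :=
  {v | v ≠ 0 ∧ dist (normalize v) u < r}

theorem norm_sub_lt_of_mem_directionCone {u x y : V} (hx : x ∈ directionCone u (1 / 2))
    (hy : y ∈ directionCone u (1 / 2)) (hxy : ‖x‖ ≤ ‖y‖) : ‖y - x‖ < ‖y‖ := by
  refine norm_sub_lt_of_dist_normalize_lt_one hx.1 hxy ?_
  calc dist (normalize y) (normalize x)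
      ≤ dist (normalize y) u + dist (normalize x) u := dist_triangle_right _ _ _
    _ < 1 / 2 + 1 / 2 := add_lt_add hy.2 hx.2
    _ = 1 := by norm_num

theorem exists_mem_directionCone_of_sphere_subset {t : Set V} {r : ℝ} (ht : sphere 0 1 ⊆ ⋃ u ∈ t, ball u r)
    {v : V} (hv : v ≠ 0) : ∃ u ∈ t, v ∈ directionCone u r := by
  have hsphere : normalize v ∈ sphere (0 : V) 1 := by
    rw [mem_sphere_zero_iff_norm]; exact norm_normalize_eq_one_iff.2 hv
  obtain ⟨u, hu, hvu⟩ := mem_iUnion₂.1 (ht hsphere)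
  exact ⟨u, hu, hv, hvu⟩

end

/-- Covering lemma for finite-dimensional normed spaces: the space can be covered by
finitely many cones `A i` such that within each cone, the longer of two vectors is
farther from the origin than from the other vector. -/
theorem covering_lemma_cones
    {E : Type*} [NormedAddCommGroup E] [NormedSpace ℝ E] [FiniteDimensional ℝ E] :
    ∃ (c : ℕ) (A : Fin c → Set E),
      (⋃ i, A i) = Set.univ ∧
      ∀ i : Fin c, ∀ x ∈ A i, ∀ y ∈ A i, ‖y‖ > ‖x‖ → ‖y - x‖ < ‖y‖ := by
  obtain ⟨t, -, ht, hcover⟩ :=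
    finite_cover_balls_of_compact (isCompact_sphere (0 : E) 1) one_half_pos
  have : Finite t := ht
  let A : Option t → Set E := fun i => i.elim {0} fun u => directionCone (u : E) (1 / 2)
  obtain ⟨c, ⟨e⟩⟩ := Finite.exists_equiv_fin (Option t)
  refine ⟨c, A ∘ e.symm, ?_, fun i x hx y hy hxy => ?_⟩
  · rw [Function.comp_def, e.symm.surjective.iUnion_comp A, eq_univ_iff_forall]
    intro v
    rcases eq_or_ne v 0 with rfl | hv
    · exact mem_iUnion.2 ⟨none, rfl⟩
    · obtain ⟨u, hu, hvu⟩ := exists_mem_directionCone_of_sphere_subset hcover hv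
      exact mem_iUnion.2 ⟨some ⟨u, hu⟩, hvu⟩
  · simp only [Function.comp_apply] at hx hy
    generalize e.symm i = j at hx hy
    cases j with
    | none =>
      rw [mem_singleton_iff.1 hx, mem_singleton_iff.1 hy] at hxy
      exact absurd hxy (lt_irrefl _)
    | some u => exact norm_sub_lt_of_mem_directionCone hx hy hxy.le
end

section
/- In a finite-dimensional normed space, if x and y are nonzero vectors with ‖x/‖x‖ − y/‖y‖‖ < 1 and ‖y‖ > ‖x‖, then ‖y − x‖ < ‖y‖. -/
/-- If the normalizations of two nonzero vectors are at distance less than 1 and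
`y` is longer than `x`, then `y - x` is shorter than `y`. -/
theorem norm_sub_lt_of_normalized_close
    {E : Type*} [NormedAddCommGroup E] [NormedSpace ℝ E]
    (x y : E) (hx : x ≠ 0) (hy : y ≠ 0)
    (h : ‖‖x‖⁻¹ • x - ‖y‖⁻¹ • y‖ < 1) (hxy : ‖y‖ > ‖x‖) :
    ‖y - x‖ < ‖y‖ := by
  have ha : (0:ℝ) < ‖x‖ := norm_pos_iff.2 hx
  have hb : (0:ℝ) < ‖y‖ := norm_pos_iff.2 hy
  have key : ‖x - (‖x‖/‖y‖) • y‖ < ‖x‖ := by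
    have : x - (‖x‖/‖y‖) • y = ‖x‖ • (‖x‖⁻¹ • x - ‖y‖⁻¹ • y) := by
      rw [smul_sub, smul_smul, smul_smul, mul_inv_cancel₀ ha.ne', one_smul, div_eq_mul_inv,
        mul_comm]
    rw [this, norm_smul, Real.norm_of_nonneg ha.le]
    calc ‖x‖ * ‖‖x‖⁻¹ • x - ‖y‖⁻¹ • y‖ < ‖x‖ * 1 := by
          exact mul_lt_mul_of_pos_left h ha
      _ = ‖x‖ := mul_one _
  have h2 : ‖y - (‖x‖/‖y‖) • y‖ = ‖y‖ - ‖x‖ := by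
    have : y - (‖x‖/‖y‖) • y = (1 - ‖x‖/‖y‖) • y := by
      rw [sub_smul, one_smul]
    rw [this, norm_smul, Real.norm_of_nonneg, sub_mul, one_mul, div_mul_cancel₀ _ hb.ne']
    have : ‖x‖/‖y‖ < 1 := (div_lt_one hb).2 hxy
    linarith
  calc ‖y - x‖ = ‖(y - (‖x‖/‖y‖) • y) - (x - (‖x‖/‖y‖) • y)‖ := by ring_nf; abel_nf
    _ ≤ ‖y - (‖x‖/‖y‖) • y‖ + ‖x - (‖x‖/‖y‖) • y‖ := norm_sub_le _ _
    _ < (‖y‖ - ‖x‖) + ‖x‖ := by rw [h2]; linarith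
    _ = ‖y‖ := by ring
end

section
/- Johnson–Lindenstrauss Lemma: let 0 < ε < 1/2 and let S ⊆ ℝ^m be a finite set with |S| = n. If m' ≥ C·ln(n)/ε² for a sufficiently large absolute constant C, then there exists a linear map T : ℝ^m → ℝ^{m'} such that (1−ε)‖x − y‖₂ ≤ ‖T(x) − T(y)‖₂ ≤ (1+ε)‖x − y‖₂ for all x, y ∈ S. -/
/-!
For a unit vector `v` and uniform random signs `r`, the Rademacher sum `X = ∑ rᵢ vᵢ` obeys
Hoeffding's bound `𝔼 exp (c X) ≤ exp (c² / 2)`, from `cosh x ≤ exp (x² / 2)`. Writing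
`exp (l X²)` as a Gaussian average of `exp (√(2l) x X)` turns this into
`𝔼 exp (l X²) ≤ (1 - 2l)^(-1/2)`, the upper Chernoff bound for `‖A v‖² = ∑ₖ Xₖ²` with `A` an
`m' × m` matrix of random signs. The lower tail comes from `exp (-y) ≤ 1 - y + y² / 2`,
`𝔼 X² = 1` and a fourth-moment bound. Both tails are `exp (-Ω (m' ε²))`, so a union bound over
the at most `n²` differences of points of `S` leaves a sign matrix `A` for which `A / √m'` works.
Probabilities are counted: every estimate bounds a number of sign patterns.
-/

open Real Finset MeasureTheory Matrix

namespace JohnsonLindenstrauss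

lemma integrable_exp_mul_sub_sq_div_two (c : ℝ) :
    Integrable fun x : ℝ => exp (c * x - x ^ 2 / 2) := by
  have h (x : ℝ) : c * x - x ^ 2 / 2 = -(1 / 2) * (x - c) ^ 2 + c ^ 2 / 2 := by ring
  simp_rw [h, exp_add]
  exact ((integrable_exp_neg_mul_sq (by norm_num : (0 : ℝ) < 1 / 2)).comp_sub_right c).mul_const _

lemma integral_exp_mul_sub_sq_div_two (c : ℝ) :
    ∫ x : ℝ, exp (c * x - x ^ 2 / 2) = √(2 * π) * exp (c ^ 2 / 2) := by
  have h (x : ℝ) : c * x - x ^ 2 / 2 = -(1 / 2) * (x - c) ^ 2 + c ^ 2 / 2 := by ring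
  simp_rw [h, exp_add, integral_mul_const]
  rw [integral_sub_right_eq_self (fun x => exp (-(1 / 2) * x ^ 2)) c, integral_gaussian,
    show π / (1 / 2) = 2 * π by ring]

lemma exp_mul_sq_eq_integral {l : ℝ} (hl : 0 ≤ l) (t : ℝ) :
    exp (l * t ^ 2) = (√(2 * π))⁻¹ * ∫ x : ℝ, exp (√(2 * l) * t * x - x ^ 2 / 2) := by
  rw [integral_exp_mul_sub_sq_div_two, mul_pow, sq_sqrt (by positivity), ← mul_assoc,
    inv_mul_cancel₀ (by positivity), one_mul]
  ring_nf

def sgn (b : Bool) : ℝ := if b then 1 else -1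

variable {ι κ : Type*} [Fintype ι]

def rademacherSum (v : ι → ℝ) (r : ι → Bool) : ℝ := ∑ i, sgn (r i) * v i

def signMatrix (ω : κ → ι → Bool) : Matrix κ ι ℝ := Matrix.of fun k i => sgn (ω k i)

lemma signMatrix_mulVec (ω : κ → ι → Bool) (v : ι → ℝ) (k : κ) :
    (signMatrix ω *ᵥ v) k = rademacherSum v (ω k) := rfl

variable [DecidableEq ι]

lemma sum_exp_mul_rademacherSum_le (v : ι → ℝ) (c : ℝ) :
    ∑ r : ι → Bool, exp (c * rademacherSum v r)
      ≤ 2 ^ Fintype.card ι * exp (c ^ 2 * (∑ i, v i ^ 2) / 2) := by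
  calc ∑ r : ι → Bool, exp (c * rademacherSum v r)
      = ∏ i, ∑ b, exp (c * (sgn b * v i)) := by
        rw [Fintype.prod_sum]
        exact sum_congr rfl fun r _ => by rw [rademacherSum, mul_sum, exp_sum]
    _ = ∏ i, 2 * cosh (c * v i) := by
        refine prod_congr rfl fun i _ => ?_
        rw [Fintype.sum_bool, cosh_eq]
        simp only [sgn, if_true, Bool.false_eq_true, if_false]
        ring_nf
    _ ≤ ∏ i, 2 * exp ((c * v i) ^ 2 / 2) :=
        prod_le_prod (fun i _ => by positivity) fun i _ => by gcongr; exact cosh_le_exp_half_sq _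
    _ = 2 ^ Fintype.card ι * exp (c ^ 2 * (∑ i, v i ^ 2) / 2) := by
        rw [prod_mul_distrib, prod_const, ← exp_sum, card_univ, mul_sum, sum_div]
        simp only [mul_pow]

lemma sum_exp_mul_rademacherSum_sq_le {v : ι → ℝ} (hv : ∑ i, v i ^ 2 = 1) {l : ℝ}
    (hl0 : 0 ≤ l) (hl : l < 1 / 2) :
    ∑ r : ι → Bool, exp (l * rademacherSum v r ^ 2) ≤ 2 ^ Fintype.card ι / √(1 - 2 * l) := by
  have hl' : 0 < 1 / 2 - l := by linarith
  have hpt (x : ℝ) : ∑ r : ι → Bool, exp (√(2 * l) * rademacherSum v r * x - x ^ 2 / 2)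
      ≤ 2 ^ Fintype.card ι * exp (-(1 / 2 - l) * x ^ 2) := by
    calc ∑ r : ι → Bool, exp (√(2 * l) * rademacherSum v r * x - x ^ 2 / 2)
        = (∑ r : ι → Bool, exp (√(2 * l) * x * rademacherSum v r)) * exp (-(x ^ 2 / 2)) := by
          rw [sum_mul]
          exact sum_congr rfl fun r _ => by rw [← exp_add]; ring_nf
      _ ≤ (2 ^ Fintype.card ι * exp ((√(2 * l) * x) ^ 2 / 2)) * exp (-(x ^ 2 / 2)) := by
          gcongr
          simpa [hv] using sum_exp_mul_rademacherSum_le v (√(2 * l) * x)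
      _ = 2 ^ Fintype.card ι * exp (-(1 / 2 - l) * x ^ 2) := by
          rw [mul_assoc, ← exp_add, mul_pow, sq_sqrt (by positivity)]
          ring_nf
  calc ∑ r : ι → Bool, exp (l * rademacherSum v r ^ 2)
      = (√(2 * π))⁻¹ * ∫ x, ∑ r : ι → Bool, exp (√(2 * l) * rademacherSum v r * x - x ^ 2 / 2) := by
        rw [integral_finsetSum _ fun r _ => integrable_exp_mul_sub_sq_div_two _, mul_sum]
        exact sum_congr rfl fun r _ => exp_mul_sq_eq_integral hl0 _
    _ ≤ (√(2 * π))⁻¹ * ∫ x, 2 ^ Fintype.card ι * exp (-(1 / 2 - l) * x ^ 2) := by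
        refine mul_le_mul_of_nonneg_left ?_ (by positivity)
        exact integral_mono (integrable_finsetSum _ fun r _ => integrable_exp_mul_sub_sq_div_two _)
          ((integrable_exp_neg_mul_sq hl').const_mul _) hpt
    _ = 2 ^ Fintype.card ι / √(1 - 2 * l) := by
        rw [integral_const_mul, integral_gaussian,
          show π / (1 / 2 - l) = 2 * π / (1 - 2 * l) by field_simp,
          sqrt_div (by positivity)]
        field_simp

lemma sum_exp_mul_rademacherSum_sq_le_exp {v : ι → ℝ} (hv : ∑ i, v i ^ 2 = 1) {l : ℝ}
    (hl0 : 0 ≤ l) (hl : l ≤ 1 / 8) :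
    ∑ r : ι → Bool, exp (l * rademacherSum v r ^ 2)
      ≤ 2 ^ Fintype.card ι * exp (l + 4 * l ^ 2) := by
  have h : 0 < 1 - 2 * l := by linarith
  have key : 1 ≤ √(1 - 2 * l) * exp (l + 4 * l ^ 2) := by
    have hy := add_one_le_exp (2 * (l + 4 * l ^ 2))
    rw [← sqrt_sq (exp_pos _).le, ← sqrt_mul h.le, ← exp_nat_mul, one_le_sqrt]
    push_cast
    nlinarith [mul_nonneg h.le (sub_nonneg.2 hy),
      mul_nonneg (sq_nonneg l) (by linarith : 0 ≤ 1 / 4 - l)]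
  refine (sum_exp_mul_rademacherSum_sq_le hv hl0 (by linarith)).trans ?_
  rw [div_le_iff₀ (sqrt_pos.2 h), mul_assoc]
  exact le_mul_of_one_le_right (by positivity) (by rwa [mul_comm])

lemma sum_sgn_mul_sgn (i j : ι) :
    ∑ r : ι → Bool, sgn (r i) * sgn (r j) = if i = j then 2 ^ Fintype.card ι else 0 := by
  split_ifs with hij
  · subst hij
    have h (b : Bool) : sgn b * sgn b = 1 := by cases b <;> norm_num [sgn]
    simp [h]
  -- As a product over coordinates, the `i`-th factor `sgn true + sgn false` vanishes.
  · calc ∑ r : ι → Bool, sgn (r i) * sgn (r j)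
        = ∏ k, ∑ b, (if k = i then sgn b else 1) * (if k = j then sgn b else 1) := by
          rw [Fintype.prod_sum]
          refine sum_congr rfl fun r _ => ?_
          rw [prod_mul_distrib, prod_ite_eq', prod_ite_eq']
          simp
      _ = 0 := prod_eq_zero (mem_univ i) (by simp [hij, sgn])

lemma sum_rademacherSum_sq (v : ι → ℝ) :
    ∑ r : ι → Bool, rademacherSum v r ^ 2 = 2 ^ Fintype.card ι * ∑ i, v i ^ 2 := by
  calc ∑ r : ι → Bool, rademacherSum v r ^ 2
      = ∑ i, ∑ j, (∑ r : ι → Bool, sgn (r i) * sgn (r j)) * (v i * v j) := by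
        simp_rw [rademacherSum, sq, sum_mul_sum, sum_mul]
        rw [sum_comm]
        refine sum_congr rfl fun i _ => ?_
        rw [sum_comm]
        exact sum_congr rfl fun j _ => sum_congr rfl fun r _ => by ring
    _ = 2 ^ Fintype.card ι * ∑ i, v i ^ 2 := by
        simp_rw [sum_sgn_mul_sgn, ite_mul, zero_mul, sum_ite_eq, mem_univ, if_true, mul_sum, sq]

lemma sum_rademacherSum_pow_four_le {v : ι → ℝ} (hv : ∑ i, v i ^ 2 = 1) :
    ∑ r : ι → Bool, rademacherSum v r ^ 4 ≤ 96 * 2 ^ Fintype.card ι := by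
  have hpt (t : ℝ) : t ^ 4 ≤ 64 * exp (1 / 4 * t ^ 2) := by
    have h := add_one_le_exp (t ^ 2 / 8)
    calc t ^ 4 = 64 * (t ^ 2 / 8) ^ 2 := by ring
      _ ≤ 64 * exp (t ^ 2 / 8) ^ 2 := by gcongr; linarith
      _ = 64 * exp (1 / 4 * t ^ 2) := by rw [← exp_nat_mul]; ring_nf
  have hsqrt : 2 / 3 ≤ √(1 - 2 * (1 / 4) : ℝ) := le_sqrt_of_sq_le (by norm_num)
  calc ∑ r : ι → Bool, rademacherSum v r ^ 4
      ≤ 64 * ∑ r : ι → Bool, exp (1 / 4 * rademacherSum v r ^ 2) := by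
        rw [mul_sum]; exact sum_le_sum fun r _ => hpt _
    _ ≤ 64 * (2 ^ Fintype.card ι / √(1 - 2 * (1 / 4))) := by
        gcongr; exact sum_exp_mul_rademacherSum_sq_le hv (by norm_num) (by norm_num)
    _ ≤ 96 * 2 ^ Fintype.card ι := by
        rw [mul_div_assoc', div_le_iff₀ ((by norm_num : (0:ℝ) < 2 / 3).trans_le hsqrt)]
        nlinarith [pow_pos (two_pos (α := ℝ)) (Fintype.card ι)]

lemma exp_neg_le_one_sub_add_sq_div_two {y : ℝ} (hy : 0 ≤ y) : exp (-y) ≤ 1 - y + y ^ 2 / 2 := by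
  have h := quadratic_le_exp_of_nonneg hy
  rw [exp_neg, inv_le_iff_one_le_mul₀ (exp_pos y)]
  nlinarith [mul_le_mul_of_nonneg_left h (by nlinarith : (0 : ℝ) ≤ 1 - y + y ^ 2 / 2),
    pow_nonneg hy 4]

lemma sum_exp_neg_mul_rademacherSum_sq_le {v : ι → ℝ} (hv : ∑ i, v i ^ 2 = 1) {l : ℝ}
    (hl : 0 ≤ l) :
    ∑ r : ι → Bool, exp (-(l * rademacherSum v r ^ 2))
      ≤ 2 ^ Fintype.card ι * exp (-l + 48 * l ^ 2) := by
  calc ∑ r : ι → Bool, exp (-(l * rademacherSum v r ^ 2))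
      ≤ ∑ r : ι → Bool, (1 - l * rademacherSum v r ^ 2 + l ^ 2 / 2 * rademacherSum v r ^ 4) :=
        sum_le_sum fun r _ => (exp_neg_le_one_sub_add_sq_div_two (by positivity)).trans_eq
          (by ring)
    _ = 2 ^ Fintype.card ι * (1 - l) + l ^ 2 / 2 * ∑ r : ι → Bool, rademacherSum v r ^ 4 := by
        rw [sum_add_distrib, sum_sub_distrib, ← mul_sum, ← mul_sum, sum_rademacherSum_sq, hv]
        simp only [sum_const, card_univ, Fintype.card_pi, Fintype.card_bool, prod_const,
          nsmul_eq_mul, Nat.cast_pow, Nat.cast_ofNat]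
        ring
    _ ≤ 2 ^ Fintype.card ι * (1 + (-l + 48 * l ^ 2)) := by
        nlinarith [sum_rademacherSum_pow_four_le hv, sq_nonneg l]
    _ ≤ 2 ^ Fintype.card ι * exp (-l + 48 * l ^ 2) := by
        gcongr; linarith [add_one_le_exp (-l + 48 * l ^ 2)]

lemma card_filter_le_exp_mul_sum_exp {α : Type*} (s : Finset α) (f : α → ℝ) (t : ℝ) {l : ℝ}
    (hl : 0 ≤ l) [DecidablePred fun a => t ≤ f a] :
    (#{a ∈ s | t ≤ f a} : ℝ) ≤ exp (-(l * t)) * ∑ a ∈ s, exp (l * f a) := by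
  rw [mul_sum, card_eq_sum_ones, Nat.cast_sum, Nat.cast_one, sum_filter]
  refine sum_le_sum fun a _ => ?_
  split_ifs with h
  · rw [← exp_add, one_le_exp_iff]; nlinarith
  · positivity

lemma sq_norm_toEuclideanLin_eq [Fintype κ] (M : Matrix κ ι ℝ) (v : EuclideanSpace ℝ ι) :
    ‖toEuclideanLin M v‖ ^ 2 = ∑ k, (M *ᵥ v.ofLp) k ^ 2 := by
  simp [EuclideanSpace.norm_sq_eq, ofLp_toLpLin]

variable [Fintype κ] [DecidableEq κ]

lemma sum_exp_mul_sum_sq_signMatrix_mulVec (v : ι → ℝ) (c : ℝ) :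
    ∑ ω : κ → ι → Bool, exp (c * ∑ k, (signMatrix ω *ᵥ v) k ^ 2)
      = (∑ r : ι → Bool, exp (c * rademacherSum v r ^ 2)) ^ Fintype.card κ := by
  rw [← card_univ, ← prod_const, Fintype.prod_sum]
  simp_rw [signMatrix_mulVec, mul_sum, exp_sum]

lemma card_fun_fun_bool :
    (Fintype.card (κ → ι → Bool) : ℝ) = (2 ^ Fintype.card ι) ^ Fintype.card κ := by
  simp

lemma card_upperTail_le {v : ι → ℝ} (hv : ∑ i, v i ^ 2 = 1) {ε : ℝ} (hε0 : 0 ≤ ε)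
    (hε1 : ε ≤ 1) :
    (#{ω : κ → ι → Bool | (1 + ε) * Fintype.card κ ≤ ∑ k, (signMatrix ω *ᵥ v) k ^ 2} : ℝ)
      ≤ Fintype.card (κ → ι → Bool) * exp (-(Fintype.card κ * ε ^ 2 / 16)) := by
  have hmgf := sum_exp_mul_rademacherSum_sq_le_exp hv (l := ε / 8) (by positivity) (by linarith)
  calc _ ≤ exp (-(ε / 8 * ((1 + ε) * Fintype.card κ)))
          * (∑ r : ι → Bool, exp (ε / 8 * rademacherSum v r ^ 2)) ^ Fintype.card κ := by
        rw [← sum_exp_mul_sum_sq_signMatrix_mulVec]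
        exact card_filter_le_exp_mul_sum_exp _ _ _ (by positivity)
    _ ≤ exp (-(ε / 8 * ((1 + ε) * Fintype.card κ)))
          * (2 ^ Fintype.card ι * exp (ε / 8 + 4 * (ε / 8) ^ 2)) ^ Fintype.card κ := by
        gcongr
    _ = Fintype.card (κ → ι → Bool) * exp (-(Fintype.card κ * ε ^ 2 / 16)) := by
        rw [card_fun_fun_bool, mul_pow, ← exp_nat_mul, mul_left_comm, ← exp_add]
        ring_nf

lemma card_lowerTail_le {v : ι → ℝ} (hv : ∑ i, v i ^ 2 = 1) {ε : ℝ} (hε0 : 0 ≤ ε) :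
    (#{ω : κ → ι → Bool | ∑ k, (signMatrix ω *ᵥ v) k ^ 2 ≤ (1 - ε) * Fintype.card κ} : ℝ)
      ≤ Fintype.card (κ → ι → Bool) * exp (-(Fintype.card κ * ε ^ 2 / 192)) := by
  have hmgf := sum_exp_neg_mul_rademacherSum_sq_le hv (l := ε / 96) (by positivity)
  calc _ ≤ exp (-(ε / 96 * -((1 - ε) * Fintype.card κ)))
          * ∑ ω : κ → ι → Bool, exp (ε / 96 * -∑ k, (signMatrix ω *ᵥ v) k ^ 2) := by
        convert card_filter_le_exp_mul_sum_exp univ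
          (fun ω : κ → ι → Bool => -∑ k, (signMatrix ω *ᵥ v) k ^ 2)
          (-((1 - ε) * Fintype.card κ)) (l := ε / 96) (by positivity) using 4
        exact neg_le_neg_iff.symm
    _ = exp (-(ε / 96 * -((1 - ε) * Fintype.card κ)))
          * (∑ r : ι → Bool, exp (-(ε / 96 * rademacherSum v r ^ 2))) ^ Fintype.card κ := by
        simp_rw [mul_neg, ← neg_mul, sum_exp_mul_sum_sq_signMatrix_mulVec]
    _ ≤ exp (-(ε / 96 * -((1 - ε) * Fintype.card κ)))
          * (2 ^ Fintype.card ι * exp (-(ε / 96) + 48 * (ε / 96) ^ 2)) ^ Fintype.card κ := by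
        gcongr
    _ = Fintype.card (κ → ι → Bool) * exp (-(Fintype.card κ * ε ^ 2 / 192)) := by
        rw [card_fun_fun_bool, mul_pow, ← exp_nat_mul, mul_left_comm, ← exp_add]
        ring_nf

lemma card_sum_sq_signMatrix_mulVec_notMem_Icc_le {v : ι → ℝ} (hv : ∑ i, v i ^ 2 = 1) {ε : ℝ}
    (hε0 : 0 ≤ ε) (hε1 : ε ≤ 1) :
    (#{ω : κ → ι → Bool | ∑ k, (signMatrix ω *ᵥ v) k ^ 2 ∉
        Set.Icc ((1 - ε) * Fintype.card κ) ((1 + ε) * Fintype.card κ)} : ℝ)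
      ≤ Fintype.card (κ → ι → Bool) * (2 * exp (-(Fintype.card κ * ε ^ 2 / 192))) := by
  set Q : (κ → ι → Bool) → ℝ := fun ω => ∑ k, (signMatrix ω *ᵥ v) k ^ 2
  set K : ℝ := (Fintype.card κ : ℝ)
  have hsub : ({ω | Q ω ∉ Set.Icc ((1 - ε) * K) ((1 + ε) * K)} : Finset _)
      ⊆ ({ω | Q ω ≤ (1 - ε) * K} : Finset _) ∪ ({ω | (1 + ε) * K ≤ Q ω} : Finset _) := by
    intro ω
    simp only [mem_filter, mem_univ, true_and, mem_union, Set.mem_Icc, not_and_or, not_le]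
    rintro (h | h)
    exacts [Or.inl h.le, Or.inr h.le]
  have hexp : exp (-(K * ε ^ 2 / 16)) ≤ exp (-(K * ε ^ 2 / 192)) := by
    gcongr
    linarith [mul_nonneg (Nat.cast_nonneg (α := ℝ) (Fintype.card κ)) (sq_nonneg ε)]
  calc _ ≤ (#{ω | Q ω ≤ (1 - ε) * K} : ℝ) + #{ω | (1 + ε) * K ≤ Q ω} := by
        exact_mod_cast (card_le_card hsub).trans (card_union_le _ _)
    _ ≤ _ := by
        linarith [card_lowerTail_le (κ := κ) hv hε0, card_upperTail_le (κ := κ) hv hε0 hε1,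
          mul_le_mul_of_nonneg_left hexp (Nat.cast_nonneg (Fintype.card (κ → ι → Bool)))]

lemma card_sq_norm_notMem_Icc_le (v : EuclideanSpace ℝ ι) {ε : ℝ} (hε0 : 0 ≤ ε) (hε1 : ε ≤ 1) :
    (#{ω : κ → ι → Bool | ‖toEuclideanLin (signMatrix ω) v‖ ^ 2 ∉
        Set.Icc ((1 - ε) * Fintype.card κ * ‖v‖ ^ 2) ((1 + ε) * Fintype.card κ * ‖v‖ ^ 2)} : ℝ)
      ≤ Fintype.card (κ → ι → Bool) * (2 * exp (-(Fintype.card κ * ε ^ 2 / 192))) := by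
  rcases eq_or_ne v 0 with rfl | hv
  · simp only [map_zero, norm_zero]
    norm_num
    positivity
  set u : ι → ℝ := ‖v‖⁻¹ • v.ofLp
  have hu : ∑ i, u i ^ 2 = 1 := by
    have hsq : ∑ i, v i ^ 2 = ‖v‖ ^ 2 := by simp [EuclideanSpace.norm_sq_eq]
    simp only [u, Pi.smul_apply, smul_eq_mul, mul_pow, ← mul_sum, hsq]
    field_simp
  have hnorm (ω : κ → ι → Bool) : ‖toEuclideanLin (signMatrix ω) v‖ ^ 2
      = (∑ k, (signMatrix ω *ᵥ u) k ^ 2) * ‖v‖ ^ 2 := by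
    have hvu : v.ofLp = ‖v‖ • u := (smul_inv_smul₀ (norm_ne_zero_iff.2 hv) _).symm
    rw [sq_norm_toEuclideanLin_eq, hvu, mulVec_smul, sum_mul]
    simp [mul_pow, mul_comm]
  simp_rw [hnorm, Set.mem_Icc, mul_le_mul_iff_left₀ (by positivity : 0 < ‖v‖ ^ 2)]
  exact card_sum_sq_signMatrix_mulVec_notMem_Icc_le hu hε0 hε1

lemma exists_signMatrix_forall_sq_norm_mem_Icc (D : Finset (EuclideanSpace ℝ ι)) {ε : ℝ}
    (hε0 : 0 ≤ ε) (hε1 : ε ≤ 1) (hD : #D * (2 * exp (-(Fintype.card κ * ε ^ 2 / 192))) < 1) :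
    ∃ ω : κ → ι → Bool, ∀ v ∈ D, ‖toEuclideanLin (signMatrix ω) v‖ ^ 2 ∈
      Set.Icc ((1 - ε) * Fintype.card κ * ‖v‖ ^ 2) ((1 + ε) * Fintype.card κ * ‖v‖ ^ 2) := by
  set bad : EuclideanSpace ℝ ι → Finset (κ → ι → Bool) := fun v =>
    {ω | ‖toEuclideanLin (signMatrix ω) v‖ ^ 2 ∉
      Set.Icc ((1 - ε) * Fintype.card κ * ‖v‖ ^ 2) ((1 + ε) * Fintype.card κ * ‖v‖ ^ 2)}
  by_contra! h
  have hcover : univ ⊆ D.biUnion bad := fun ω _ => by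
    obtain ⟨v, hv, hω⟩ := h ω
    exact mem_biUnion.2 ⟨v, hv, by simpa [bad] using hω⟩
  have hcount : (Fintype.card (κ → ι → Bool) : ℝ) ≤ ∑ v ∈ D, (#(bad v) : ℝ) := by
    exact_mod_cast (card_le_card hcover).trans card_biUnion_le
  have hbad : ∑ v ∈ D, (#(bad v) : ℝ)
      ≤ #D * (Fintype.card (κ → ι → Bool) * (2 * exp (-(Fintype.card κ * ε ^ 2 / 192)))) := by
    rw [← nsmul_eq_mul]
    exact sum_le_card_nsmul D _ _ fun v _ => card_sq_norm_notMem_Icc_le v hε0 hε1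
  have hN : (0 : ℝ) < Fintype.card (κ → ι → Bool) := by exact_mod_cast Fintype.card_pos
  linarith [mul_lt_mul_of_pos_left hD hN]

lemma le_and_le_of_sq_mem_Icc {ε a b : ℝ} (hε0 : 0 ≤ ε) (hε1 : ε ≤ 1) (ha : 0 ≤ a)
    (hb : 0 ≤ b) (h : b ^ 2 ∈ Set.Icc ((1 - ε) * a ^ 2) ((1 + ε) * a ^ 2)) :
    (1 - ε) * a ≤ b ∧ b ≤ (1 + ε) * a := by
  constructor
  · refine (pow_le_pow_iff_left₀ (by nlinarith) hb two_ne_zero).1 ?_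
    nlinarith [h.1, sq_nonneg a]
  · refine (pow_le_pow_iff_left₀ hb (by nlinarith) two_ne_zero).1 ?_
    nlinarith [h.2, sq_nonneg a]

lemma exists_linearMap_norm_apply_bounds (D : Finset (EuclideanSpace ℝ ι)) {ε : ℝ}
    (hε0 : 0 ≤ ε) (hε1 : ε ≤ 1) (hκ : 0 < Fintype.card κ)
    (hD : #D * (2 * exp (-(Fintype.card κ * ε ^ 2 / 192))) < 1) :
    ∃ T : EuclideanSpace ℝ ι →ₗ[ℝ] EuclideanSpace ℝ κ,
      ∀ v ∈ D, (1 - ε) * ‖v‖ ≤ ‖T v‖ ∧ ‖T v‖ ≤ (1 + ε) * ‖v‖ := by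
  obtain ⟨ω, hω⟩ := exists_signMatrix_forall_sq_norm_mem_Icc D hε0 hε1 hD
  refine ⟨(√(Fintype.card κ))⁻¹ • toEuclideanLin (signMatrix ω), fun v hv =>
    le_and_le_of_sq_mem_Icc hε0 hε1 (norm_nonneg _) (norm_nonneg _) ?_⟩
  have hK : (0 : ℝ) < Fintype.card κ := by exact_mod_cast hκ
  obtain ⟨h1, h2⟩ := hω v hv
  rw [LinearMap.smul_apply, norm_smul, mul_pow, norm_inv, norm_of_nonneg (sqrt_nonneg _),
    inv_pow, sq_sqrt hK.le, Set.mem_Icc, le_inv_mul_iff₀ hK, inv_mul_le_iff₀ hK]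
  constructor <;> linarith

lemma sq_mul_two_mul_exp_neg_lt_one {n : ℕ} (hn : 2 ≤ n) {x : ℝ} (hx : 4 * log n ≤ x) :
    (n : ℝ) ^ 2 * (2 * exp (-x)) < 1 := by
  have hn' : (2 : ℝ) ≤ n := by exact_mod_cast hn
  have hexp : exp (-x) ≤ ((n : ℝ) ^ 4)⁻¹ := by
    rw [← exp_log (by positivity : (0 : ℝ) < n ^ 4), ← exp_neg, log_pow]
    gcongr
    push_cast
    linarith
  calc (n : ℝ) ^ 2 * (2 * exp (-x)) ≤ (n : ℝ) ^ 2 * (2 * ((n : ℝ) ^ 4)⁻¹) := by gcongr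
    _ = 2 / (n : ℝ) ^ 2 := by field_simp
    _ < 1 := by rw [div_lt_one (by positivity)]; nlinarith

end JohnsonLindenstrauss

open JohnsonLindenstrauss in
/-- The Johnson–Lindenstrauss Lemma. -/
theorem johnson_lindenstrauss :
    ∃ C : ℝ, 0 < C ∧
      ∀ (ε : ℝ), 0 < ε → ε < 1 / 2 →
      ∀ (m : ℕ) (S : Finset (EuclideanSpace ℝ (Fin m))) (n : ℕ), S.card = n →
      ∀ m' : ℕ, C * Real.log n / ε ^ 2 ≤ (m' : ℝ) →
      ∃ T : EuclideanSpace ℝ (Fin m) →ₗ[ℝ] EuclideanSpace ℝ (Fin m'),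
        ∀ x ∈ S, ∀ y ∈ S,
          (1 - ε) * ‖x - y‖ ≤ ‖T x - T y‖ ∧ ‖T x - T y‖ ≤ (1 + ε) * ‖x - y‖ := by
  refine ⟨768, by norm_num, fun ε hε hε2 m S n hcard m' hm' => ?_⟩
  classical
  rcases le_or_gt n 1 with hn | hn
  · exact ⟨0, fun x hx y hy => by simp [card_le_one.1 (hcard ▸ hn) x hx y hy]⟩
  have hlog : 0 < log n := log_pos (by exact_mod_cast hn)
  have hm'pos : (0 : ℝ) < m' := lt_of_lt_of_le (by positivity) hm'
  have hm'ε : 4 * log n ≤ m' * ε ^ 2 / 192 := by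
    rw [div_le_iff₀ (by positivity)] at hm'
    linarith
  set D := (S ×ˢ S).image fun p => p.1 - p.2
  have hD : (#D : ℝ) * (2 * exp (-(m' * ε ^ 2 / 192))) < 1 := by
    refine lt_of_le_of_lt ?_ (sq_mul_two_mul_exp_neg_lt_one hn hm'ε)
    gcongr
    exact_mod_cast card_image_le.trans (by rw [card_product, hcard, sq])
  obtain ⟨T, hT⟩ := exists_linearMap_norm_apply_bounds (κ := Fin m') D hε.le (by linarith)
    (by simpa using hm'pos) (by simpa using hD)
  refine ⟨T, fun x hx y hy => ?_⟩
  rw [← map_sub]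
  exact hT _ (mem_image.2 ⟨(x, y), mem_product.2 ⟨hx, hy⟩, rfl⟩)
end

section
/- Existence of a soft margin classifier lower-bounds the transportation distance: let (Ω,d) be a metric space with diameter at most 1, let μ₀ and μ₁ be probability distributions of the two classes, and suppose there exists a 1-Lipschitz function f : Ω → ℝ and δ ≥ 0, ε > 0 such that f(X) ≥ ε/2 for all class-1 points and f(X') ≤ −ε/2 for all class-0 points outside a set of measure at most δ. Then the Mass Transportation Distance satisfies d̂(μ₀, μ₁) ≥ ε(1 − δ). -/
open MeasureTheory

/-- Existence of a soft (ε,δ)-margin 1-Lipschitz classifier lower-bounds the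
Mass Transportation Distance between the two class distributions: every coupling
has expected cost at least `ε (1 - δ)`. -/
theorem mtd_ge_of_soft_margin
    {Ω : Type*} [MetricSpace Ω] [MeasurableSpace Ω] [BorelSpace Ω]
    (hdiam : EMetric.diam (Set.univ : Set Ω) ≤ 1)
    (μ₀ μ₁ : Measure Ω) [IsProbabilityMeasure μ₀] [IsProbabilityMeasure μ₁]
    (f : Ω → ℝ) (hf : LipschitzWith 1 f)
    (ε δ : ℝ) (hε : 0 < ε) (hδ : 0 ≤ δ)
    (B₀ B₁ : Set Ω) (hB₀ : MeasurableSet B₀) (hB₁ : MeasurableSet B₁)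
    (hbad : μ₀ B₀ + μ₁ B₁ ≤ ENNReal.ofReal δ)
    (hmargin₁ : ∀ x ∉ B₁, ε / 2 ≤ f x)
    (hmargin₀ : ∀ x ∉ B₀, f x ≤ -(ε / 2)) :
    ∀ ν : Measure (Ω × Ω), ν.map Prod.fst = μ₀ → ν.map Prod.snd = μ₁ →
      ENNReal.ofReal (ε * (1 - δ)) ≤ ∫⁻ p, ENNReal.ofReal (dist p.1 p.2) ∂ν := by
  intro ν h0 h1
  rcases le_or_gt 1 δ with hδ1 | hδ1
  · have : ε * (1 - δ) ≤ 0 := mul_nonpos_of_nonneg_of_nonpos hε.le (by linarith)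
    simpa [ENNReal.ofReal_eq_zero.2 this] using zero_le _
  -- bad set in the product space
  set bad : Set (Ω × Ω) := (B₀ ×ˢ (Set.univ : Set Ω)) ∪ ((Set.univ : Set Ω) ×ˢ B₁) with hbaddef
  have hbadm : MeasurableSet bad :=
    (hB₀.prod MeasurableSet.univ).union (MeasurableSet.univ.prod hB₁)
  have hν0 : ν (Prod.fst ⁻¹' B₀) = μ₀ B₀ := by
    rw [← h0, Measure.map_apply measurable_fst hB₀]
  have hν1 : ν (Prod.snd ⁻¹' B₁) = μ₁ B₁ := by
    rw [← h1, Measure.map_apply measurable_snd hB₁]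
  have hνuniv : ν Set.univ = 1 := by
    have := Measure.map_apply (μ := ν) measurable_fst MeasurableSet.univ
    simp [h0] at this
    simpa using this.symm
  have hbadν : ν bad ≤ ENNReal.ofReal δ := by
    calc ν bad ≤ ν (B₀ ×ˢ (Set.univ : Set Ω)) + ν ((Set.univ : Set Ω) ×ˢ B₁) :=
          measure_union_le _ _
      _ = μ₀ B₀ + μ₁ B₁ := by
          rw [← hν0, ← hν1]
          congr 1 <;> congr 1 <;> ext p <;> simp
      _ ≤ ENNReal.ofReal δ := hbad
  have hgood : (1 : ENNReal) - ENNReal.ofReal δ ≤ ν badᶜ := by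
    have : ν badᶜ = ν Set.univ - ν bad := measure_compl hbadm ((lt_of_le_of_lt hbadν ENNReal.ofReal_lt_top).ne)
    rw [this, hνuniv]
    exact tsub_le_tsub_left hbadν 1
  -- on the good set the distance is at least ε
  have hdist : ∀ p : Ω × Ω, p ∈ badᶜ → ENNReal.ofReal ε ≤ ENNReal.ofReal (dist p.1 p.2) := by
    intro p hp
    simp only [hbaddef, Set.mem_compl_iff, Set.mem_union, Set.mem_prod, Set.mem_univ,
      and_true, true_and, not_or] at hp
    apply ENNReal.ofReal_le_ofReal
    have h2 : ε / 2 ≤ f p.2 := hmargin₁ p.2 hp.2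
    have h1' : f p.1 ≤ -(ε / 2) := hmargin₀ p.1 hp.1
    have hlip : |f p.1 - f p.2| ≤ dist p.1 p.2 := by
      have := hf.dist_le_mul p.1 p.2
      simpa [Real.dist_eq] using this
    calc ε = ε / 2 - (-(ε / 2)) := by ring
      _ ≤ f p.2 - f p.1 := by linarith
      _ ≤ |f p.1 - f p.2| := by rw [abs_sub_comm]; exact le_abs_self _
      _ ≤ dist p.1 p.2 := hlip
  calc ENNReal.ofReal (ε * (1 - δ))
      = ENNReal.ofReal ε * ENNReal.ofReal (1 - δ) :=
        ENNReal.ofReal_mul hε.le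
    _ = ENNReal.ofReal ε * (1 - ENNReal.ofReal δ) := by
        rw [ENNReal.ofReal_sub 1 hδ, ENNReal.ofReal_one]
    _ ≤ ENNReal.ofReal ε * ν badᶜ := by
        exact mul_le_mul_right hgood _
    _ = ∫⁻ _ in badᶜ, ENNReal.ofReal ε ∂ν := by
        rw [setLIntegral_const, mul_comm]
    _ ≤ ∫⁻ p in badᶜ, ENNReal.ofReal (dist p.1 p.2) ∂ν :=
        setLIntegral_mono' hbadm.compl hdist
    _ ≤ ∫⁻ p, ENNReal.ofReal (dist p.1 p.2) ∂ν := setLIntegral_le_lintegral _ _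
end

section
/- Wasserstein-1 distance on the real line as the L¹ distance of CDFs: for two finitely-supported probability measures ν₀, ν₁ on ℝ with cumulative distribution functions F₀ and F₁, the Mass Transportation Distance with respect to |·−·| satisfies d̂(ν₀, ν₁) = ∫_ℝ |F₀(x) − F₁(x)| dx. -/
/-!
Writing `F₀ - F₁` through a coupling `ν` gives `F₀ x - F₁ x = ∑ᵢⱼ νᵢⱼ (𝟙[tᵢ ≤ x] - 𝟙[tⱼ ≤ x])`,
and `|tᵢ - tⱼ| = ∫ |𝟙[tᵢ ≤ x] - 𝟙[tⱼ ≤ x]| dx`, so the triangle inequality bounds the `L¹` distance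
of the CDFs by the cost of every coupling. Equality holds as soon as, for every `x`, all terms
of that sum have the same sign, which is the case when the support of `ν` is monotone. The
quantile coupling, which pairs the `i`-th interval of the partition of `[0, 1)` by the cumulative
weights of `ν₀` with the `j`-th one of `ν₁` and gives the pair the length of their overlap, has
monotone support once the atoms are sorted.
-/

open MeasureTheory Set

section Coupling

variable {ι : Type*}

def HasMonotoneSupport (t : ι → ℝ) (ν : ι → ι → ℝ) : Prop :=
  ∀ i j i' j', ν i j ≠ 0 → ν i' j' ≠ 0 → t i' < t i → t j' ≤ t j

lemma HasMonotoneSupport.comp_equiv {κ : Type*} {t : ι → ℝ} {ν : κ → κ → ℝ} (e : κ ≃ ι)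
    (hmono : HasMonotoneSupport (t ∘ e) ν) :
    HasMonotoneSupport t fun i j ↦ ν (e.symm i) (e.symm j) := fun i j i' j' h h' hlt ↦ by
  simpa using hmono (e.symm i) (e.symm j) (e.symm i') (e.symm j') h h' (by simpa using hlt)

variable [Fintype ι]

noncomputable def cdf (t p : ι → ℝ) (x : ℝ) : ℝ := ∑ i, if t i ≤ x then p i else 0

structure IsCoupling (p q : ι → ℝ) (ν : ι → ι → ℝ) : Prop where
  nonneg : ∀ i j, 0 ≤ ν i j
  sum_right : ∀ i, ∑ j, ν i j = p i
  sum_left : ∀ j, ∑ i, ν i j = q j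

def transportCost (t : ι → ℝ) (ν : ι → ι → ℝ) : ℝ := ∑ i, ∑ j, |t i - t j| * ν i j

noncomputable def diracCdfSub (a b x : ℝ) : ℝ :=
  (if a ≤ x then 1 else 0) - (if b ≤ x then 1 else 0)

lemma abs_diracCdfSub (a b x : ℝ) :
    |diracCdfSub a b x| = (Ico (min a b) (max a b)).indicator 1 x := by
  simp only [diracCdfSub, indicator_apply, mem_Ico, Pi.one_apply, min_def, max_def]
  split_ifs <;> grind

lemma integrable_abs_diracCdfSub (a b : ℝ) : Integrable fun x ↦ |diracCdfSub a b x| := by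
  simp_rw [abs_diracCdfSub]
  exact (integrable_indicator_iff measurableSet_Ico).2 (integrableOn_const measure_Ico_lt_top.ne)

lemma integral_abs_diracCdfSub (a b : ℝ) : ∫ x, |diracCdfSub a b x| = |a - b| := by
  simp_rw [abs_diracCdfSub, integral_indicator_one measurableSet_Ico,
    Real.volume_real_Ico_of_le min_le_max, max_sub_min_eq_abs, abs_sub_comm]

lemma le_and_lt_of_diracCdfSub_pos {a b x : ℝ} (h : 0 < diracCdfSub a b x) : a ≤ x ∧ x < b := by
  unfold diracCdfSub at h
  split_ifs at h <;> grind

lemma le_and_lt_of_diracCdfSub_neg {a b x : ℝ} (h : diracCdfSub a b x < 0) : b ≤ x ∧ x < a := by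
  unfold diracCdfSub at h
  split_ifs at h <;> grind

lemma IsCoupling.cdf_sub_cdf {p q : ι → ℝ} {ν : ι → ι → ℝ} (hν : IsCoupling p q ν) (t : ι → ℝ)
    (x : ℝ) : cdf t p x - cdf t q x = ∑ i, ∑ j, ν i j * diracCdfSub (t i) (t j) x := by
  simp only [diracCdfSub, mul_sub, Finset.sum_sub_distrib]
  rw [Finset.sum_comm (f := fun i j ↦ ν i j * if t j ≤ x then 1 else 0)]
  simp only [← Finset.sum_mul, hν.sum_right, hν.sum_left]
  simp only [cdf, mul_ite, mul_one, mul_zero]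

lemma transportCost_eq_integral (t : ι → ℝ) (ν : ι → ι → ℝ) :
    transportCost t ν = ∫ x, ∑ i, ∑ j, ν i j * |diracCdfSub (t i) (t j) x| := by
  have hint i j : Integrable fun x ↦ ν i j * |diracCdfSub (t i) (t j) x| :=
    (integrable_abs_diracCdfSub _ _).const_mul _
  rw [integral_finsetSum _ fun i _ ↦ integrable_finsetSum _ fun j _ ↦ hint i j]
  refine Finset.sum_congr rfl fun i _ ↦ ?_
  rw [integral_finsetSum _ fun j _ ↦ hint i j]
  refine Finset.sum_congr rfl fun j _ ↦ ?_
  rw [integral_const_mul, integral_abs_diracCdfSub, mul_comm]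

lemma IsCoupling.integral_abs_cdf_sub_le_transportCost {p q : ι → ℝ} {ν : ι → ι → ℝ}
    (hν : IsCoupling p q ν) (t : ι → ℝ) :
    ∫ x, |cdf t p x - cdf t q x| ≤ transportCost t ν := by
  rw [transportCost_eq_integral]
  refine integral_mono_of_nonneg (.of_forall fun x ↦ abs_nonneg _)
    (integrable_finsetSum _ fun i _ ↦ integrable_finsetSum _ fun j _ ↦
      (integrable_abs_diracCdfSub _ _).const_mul _) (.of_forall fun x ↦ ?_)
  simp only [hν.cdf_sub_cdf]
  refine (Finset.abs_sum_le_sum_abs _ _).trans (Finset.sum_le_sum fun i _ ↦ ?_)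
  refine (Finset.abs_sum_le_sum_abs _ _).trans_eq (Finset.sum_congr rfl fun j _ ↦ ?_)
  rw [abs_mul, abs_of_nonneg (hν.nonneg i j)]

lemma abs_sum_sum_of_nonneg_or_nonpos {κ : Type*} [Fintype κ] {f : ι → κ → ℝ}
    (hf : (∀ i j, 0 ≤ f i j) ∨ (∀ i j, f i j ≤ 0)) :
    |∑ i, ∑ j, f i j| = ∑ i, ∑ j, |f i j| := by
  wlog h : ∀ i j, 0 ≤ f i j generalizing f
  · have hneg := this (f := fun i j ↦ -f i j) (.inl fun i j ↦ neg_nonneg.2 (hf.resolve_left h i j))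
      fun i j ↦ neg_nonneg.2 (hf.resolve_left h i j)
    simpa only [Finset.sum_neg_distrib, abs_neg] using hneg
  simp_rw [abs_of_nonneg (h _ _)]
  exact abs_of_nonneg (Finset.sum_nonneg fun i _ ↦ Finset.sum_nonneg fun j _ ↦ h i j)

lemma HasMonotoneSupport.abs_sum_mul_diracCdfSub {t : ι → ℝ} {ν : ι → ι → ℝ}
    (hmono : HasMonotoneSupport t ν) (hν : ∀ i j, 0 ≤ ν i j) (x : ℝ) :
    |∑ i, ∑ j, ν i j * diracCdfSub (t i) (t j) x| =
      ∑ i, ∑ j, ν i j * |diracCdfSub (t i) (t j) x| := by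
  have habs i j : ν i j * |diracCdfSub (t i) (t j) x| = |ν i j * diracCdfSub (t i) (t j) x| := by
    rw [abs_mul, abs_of_nonneg (hν i j)]
  simp_rw [habs]
  refine abs_sum_sum_of_nonneg_or_nonpos ?_
  by_contra! ⟨⟨i, j, hneg⟩, ⟨i', j', hpos⟩⟩
  obtain ⟨hj, hi⟩ := le_and_lt_of_diracCdfSub_neg (neg_of_mul_neg_right hneg (hν i j))
  obtain ⟨hi', hj'⟩ := le_and_lt_of_diracCdfSub_pos (pos_of_mul_pos_right hpos (hν i' j'))
  have := hmono i j i' j' (left_ne_zero_of_mul hneg.ne) (left_ne_zero_of_mul hpos.ne')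
    (hi'.trans_lt hi)
  linarith

lemma IsCoupling.transportCost_eq_integral_abs_cdf_sub {p q t : ι → ℝ} {ν : ι → ι → ℝ}
    (hν : IsCoupling p q ν) (hmono : HasMonotoneSupport t ν) :
    transportCost t ν = ∫ x, |cdf t p x - cdf t q x| := by
  rw [transportCost_eq_integral]
  congr 1 with x
  rw [hν.cdf_sub_cdf, hmono.abs_sum_mul_diracCdfSub hν.nonneg]

lemma IsCoupling.comp_equiv {κ : Type*} [Fintype κ] {p q : ι → ℝ} {ν : κ → κ → ℝ} (e : κ ≃ ι)
    (hν : IsCoupling (p ∘ e) (q ∘ e) ν) :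
    IsCoupling p q fun i j ↦ ν (e.symm i) (e.symm j) where
  nonneg _ _ := hν.nonneg _ _
  sum_right i := by
    simpa using (Equiv.sum_comp e.symm (ν (e.symm i))).trans (hν.sum_right (e.symm i))
  sum_left j := by
    simpa using (Equiv.sum_comp e.symm (ν · (e.symm j))).trans (hν.sum_left (e.symm j))

end Coupling

lemma measureReal_inter_Ico {α : Type*} [LinearOrder α] [TopologicalSpace α]
    [OrderClosedTopology α] [MeasurableSpace α] [OpensMeasurableSpace α] (μ : Measure α)
    {S : Set α} (hS : μ S ≠ ⊤) {a b : α} (hab : a ≤ b) :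
    μ.real (S ∩ Ico a b) = μ.real (S ∩ Iio b) - μ.real (S ∩ Iio a) := by
  have hdiff : (S ∩ Iio b) \ Iio a = S ∩ Ico a b := by
    ext x; simp [and_assoc, and_comm]
  have hinter : S ∩ Iio b ∩ Iio a = S ∩ Iio a := by
    rw [inter_assoc, Iio_inter_Iio, min_eq_right hab]
  rw [← measureReal_sdiff_add_inter (s := S ∩ Iio b) measurableSet_Iio
    (measure_ne_top_of_subset inter_subset_left hS), hdiff, hinter, add_sub_cancel_right]

namespace Fin

variable {n : ℕ} {M : Type*}

lemma sum_succ_sub_castSucc [AddCommGroup M] (f : Fin (n + 1) → M) :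
    ∑ i : Fin n, (f i.succ - f i.castSucc) = f (last n) - f 0 := by
  induction n with
  | zero => simp
  | succ n ih =>
    simp only [sum_univ_castSucc, succ_castSucc, ih fun i ↦ f i.castSucc, castSucc_zero,
      succ_last]
    abel

lemma monotone_partialSum [AddCommMonoid M] [PartialOrder M] [IsOrderedAddMonoid M]
    {p : Fin n → M} (hp : ∀ i, 0 ≤ p i) : Monotone (partialSum p) :=
  monotone_iff_le_succ.2 fun i ↦ by rw [partialSum_succ]; exact le_add_of_nonneg_right (hp i)

lemma partialSum_last [AddCommMonoid M] (p : Fin n → M) : partialSum p (last n) = ∑ i, p i := by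
  simp [partialSum, List.take_of_length_le, List.sum_ofFn]

end Fin

section QuantileCoupling

open Fin

variable {n : ℕ}

def quantileInterval (p : Fin n → ℝ) (i : Fin n) : Set ℝ :=
  Ico (partialSum p i.castSucc) (partialSum p i.succ)

noncomputable def quantileCoupling (p q : Fin n → ℝ) (i j : Fin n) : ℝ :=
  volume.real (quantileInterval p i ∩ quantileInterval q j)

lemma volume_real_quantileInterval (p : Fin n → ℝ) (hp : ∀ i, 0 ≤ p i) (i : Fin n) :
    volume.real (quantileInterval p i) = p i := by
  rw [quantileInterval, Real.volume_real_Ico_of_le (monotone_partialSum hp (castSucc_le_succ i)),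
    partialSum_succ, add_sub_cancel_left]

lemma quantileInterval_subset {p : Fin n → ℝ} (hp : ∀ i, 0 ≤ p i) (i : Fin n) :
    quantileInterval p i ⊆ Ico 0 (∑ i, p i) := by
  rw [← partialSum_zero p, ← partialSum_last]
  exact Ico_subset_Ico (monotone_partialSum hp (zero_le _))
    (monotone_partialSum hp (le_last _))

lemma sum_measureReal_inter_quantileInterval (μ : Measure ℝ) {S : Set ℝ} (hS : μ S ≠ ⊤)
    {q : Fin n → ℝ} (hq : ∀ j, 0 ≤ q j) :
    ∑ j, μ.real (S ∩ quantileInterval q j) = μ.real (S ∩ Iio (∑ j, q j)) - μ.real (S ∩ Iio 0) := by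
  unfold quantileInterval
  rw [Finset.sum_congr rfl fun j _ ↦
      measureReal_inter_Ico μ hS (monotone_partialSum hq (castSucc_le_succ j)),
    sum_succ_sub_castSucc fun k ↦ μ.real (S ∩ Iio (partialSum q k)), partialSum_last,
    partialSum_zero]

lemma sum_quantileCoupling_right {p q : Fin n → ℝ} (hp : ∀ i, 0 ≤ p i) (hq : ∀ j, 0 ≤ q j)
    (hpq : ∑ i, p i = ∑ j, q j) (i : Fin n) : ∑ j, quantileCoupling p q i j = p i := by
  have hsub := quantileInterval_subset hp i
  have htop : quantileInterval p i ∩ Iio (∑ j, q j) = quantileInterval p i :=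
    inter_eq_left.2 (hpq ▸ hsub.trans Ico_subset_Iio_self)
  have hbot : quantileInterval p i ∩ Iio 0 = ∅ :=
    eq_empty_of_forall_notMem fun x hx ↦ (hsub hx.1).1.not_gt hx.2
  simp only [quantileCoupling]
  rw [sum_measureReal_inter_quantileInterval volume (S := quantileInterval p i)
    measure_Ico_lt_top.ne hq, htop, hbot, measureReal_empty, sub_zero,
    volume_real_quantileInterval p hp]

lemma quantileCoupling_comm (p q : Fin n → ℝ) (i j : Fin n) :
    quantileCoupling p q i j = quantileCoupling q p j i := by
  rw [quantileCoupling, inter_comm, quantileCoupling]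

lemma isCoupling_quantileCoupling {p q : Fin n → ℝ} (hp : ∀ i, 0 ≤ p i) (hq : ∀ j, 0 ≤ q j)
    (hpq : ∑ i, p i = ∑ j, q j) : IsCoupling p q (quantileCoupling p q) where
  nonneg _ _ := measureReal_nonneg
  sum_right := sum_quantileCoupling_right hp hq hpq
  sum_left j := by
    simpa only [quantileCoupling_comm p q] using sum_quantileCoupling_right hq hp hpq.symm j

lemma le_of_quantileCoupling_ne_zero {p q : Fin n → ℝ} (hp : ∀ i, 0 ≤ p i) (hq : ∀ j, 0 ≤ q j)
    {i j i' j' : Fin n} (h : quantileCoupling p q i j ≠ 0) (h' : quantileCoupling p q i' j' ≠ 0)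
    (hi : i' < i) : j' ≤ j := by
  obtain ⟨u, hui, huj⟩ := nonempty_of_measureReal_ne_zero h
  obtain ⟨u', hu'i, hu'j⟩ := nonempty_of_measureReal_ne_zero h'
  by_contra! hj
  have hlt : u' < u :=
    hu'i.2.trans_le ((monotone_partialSum hp (succ_le_castSucc_iff.2 hi)).trans hui.1)
  have hgt : u < u' :=
    huj.2.trans_le ((monotone_partialSum hq (succ_le_castSucc_iff.2 hj)).trans hu'j.1)
  exact hlt.not_gt hgt

lemma hasMonotoneSupport_quantileCoupling {p q t : Fin n → ℝ} (hp : ∀ i, 0 ≤ p i)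
    (hq : ∀ j, 0 ≤ q j) (ht : Monotone t) : HasMonotoneSupport t (quantileCoupling p q) :=
  fun _ _ _ _ h h' hlt ↦ ht (le_of_quantileCoupling_ne_zero hp hq h h' (ht.reflect_lt hlt))

theorem exists_isCoupling_hasMonotoneSupport (t : Fin n → ℝ) {p q : Fin n → ℝ}
    (hp : ∀ i, 0 ≤ p i) (hq : ∀ j, 0 ≤ q j) (hpq : ∑ i, p i = ∑ j, q j) :
    ∃ ν, IsCoupling p q ν ∧ HasMonotoneSupport t ν := by
  set σ := Tuple.sort t
  have hpqσ : ∑ i, (p ∘ σ) i = ∑ j, (q ∘ σ) j := by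
    simpa only [Function.comp_apply, Equiv.sum_comp] using hpq
  exact ⟨_, (isCoupling_quantileCoupling (fun i ↦ hp _) (fun j ↦ hq _) hpqσ).comp_equiv σ,
    (hasMonotoneSupport_quantileCoupling (fun i ↦ hp _) (fun j ↦ hq _)
      (Tuple.monotone_sort t)).comp_equiv σ⟩

end QuantileCoupling

/-- The Wasserstein-1 distance between two finitely-supported probability measures
on the real line equals the L¹ distance between their cumulative distribution
functions. -/
theorem wasserstein_line_eq_cdf_l1
    (w : ℕ) (t : Fin w → ℝ) (p q : Fin w → ℝ)
    (hp : ∀ i, 0 ≤ p i) (hq : ∀ i, 0 ≤ q i)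
    (hps : ∑ i, p i = 1) (hqs : ∑ i, q i = 1) :
    IsGLB
      {c : ℝ | ∃ ν : Fin w → Fin w → ℝ,
        (∀ i j, 0 ≤ ν i j) ∧
        (∀ i, ∑ j, ν i j = p i) ∧
        (∀ j, ∑ i, ν i j = q j) ∧
        c = ∑ i, ∑ j, |t i - t j| * ν i j}
      (∫ x, |(∑ i, if t i ≤ x then p i else 0) - (∑ i, if t i ≤ x then q i else 0)|) := by
  obtain ⟨ν, hν, hmono⟩ := exists_isCoupling_hasMonotoneSupport t hp hq (hps.trans hqs.symm)
  refine IsLeast.isGLB ⟨⟨ν, hν.nonneg, hν.sum_right, hν.sum_left,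
    (hν.transportCost_eq_integral_abs_cdf_sub hmono).symm⟩, ?_⟩
  rintro c ⟨ν', hnonneg, hsum_right, hsum_left, rfl⟩
  exact IsCoupling.integral_abs_cdf_sub_le_transportCost ⟨hnonneg, hsum_right, hsum_left⟩ t
end
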